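/- For all meLL formulas A and B, the sequent ⊢ (!(!A⊗B) ⊸ (!!A ⊗ ?B))^0 is provable in the mL³ 2-sequent calculus, i.e., the 2-sequent ⊢ (?(?A⊥ ⅋ B⊥))^0, (!!A ⊗ ?B)^0 has a proper derivation, witnessing that mL³ properly extends mELL at the level of provability. -/

import Mathlib

/-!
Formulas of second-order unit-free multiplicative exponential linear logic (meLL),
with the paragraph modality. Propositional variables are natural numbers; `pos X`
is the variable X and `neg X` is its dual X⊥.
-/
inductive Form : Type
  | pos : ℕ → Form
  | neg : ℕ → Form
  | tens : Form → Form → Form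
  | parr : Form → Form → Form
  | oc : Form → Form
  | wn : Form → Form
  | ex : ℕ → Form → Form
  | fa : ℕ → Form → Form
  | parg : Form → Form
  deriving DecidableEq

namespace Form

/-- Linear negation, defined by De Morgan duality. -/
def negF : Form → Form
  | pos X => neg X
  | neg X => pos X
  | tens A B => parr (negF B) (negF A)
  | parr A B => tens (negF B) (negF A)
  | oc A => wn (negF A)
  | wn A => oc (negF A)
  | ex X A => fa X (negF A)
  | fa X A => ex X (negF A)
  | parg A => parg (negF A)

/-- Free propositional variables of a formula. -/
def fv : Form → Finset ℕ
  | pos X => {X}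
  | neg X => {X}
  | tens A B => fv A ∪ fv B
  | parr A B => fv A ∪ fv B
  | oc A => fv A
  | wn A => fv A
  | ex X A => fv A \ {X}
  | fa X A => fv A \ {X}
  | parg A => fv A

/-- Substitution `A[B/X]`: the occurrences of the variable X are replaced by B,
and the occurrences of X⊥ by B⊥. -/
def subst (B : Form) (X : ℕ) : Form → Form
  | pos Y => if Y = X then B else pos Y
  | neg Y => if Y = X then negF B else neg Y
  | tens A₁ A₂ => tens (subst B X A₁) (subst B X A₂)
  | parr A₁ A₂ => parr (subst B X A₁) (subst B X A₂)
  | oc A => oc (subst B X A)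
  | wn A => wn (subst B X A)
  | ex Y A => if Y = X then ex Y A else ex Y (subst B X A)
  | fa Y A => if Y = X then fa Y A else fa Y (subst B X A)
  | parg A => parg (subst B X A)

end Form

/-- An indexed formula: a meLL formula carrying an integer index. -/
abbrev IForm := Form × ℤ

/-- The mL³ 2-sequent calculus.  A 2-sequent is represented as a finite multiset
of indexed formulas.  Daimon and mix are included as in the paper. -/
inductive Deriv3 : Multiset IForm → Prop
  | ax (A : Form) (i : ℤ) : Deriv3 {(A.negF, i), (A, i)}
  | cut (Γ Δ : Multiset IForm) (A : Form) (i : ℤ) :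
      Deriv3 ((A, i) ::ₘ Γ) → Deriv3 ((A.negF, i) ::ₘ Δ) → Deriv3 (Γ + Δ)
  | tens (Γ Δ : Multiset IForm) (A B : Form) (i : ℤ) :
      Deriv3 ((A, i) ::ₘ Γ) → Deriv3 ((B, i) ::ₘ Δ) →
      Deriv3 ((Form.tens A B, i) ::ₘ (Γ + Δ))
  | parr (Γ : Multiset IForm) (A B : Form) (i : ℤ) :
      Deriv3 ((A, i) ::ₘ (B, i) ::ₘ Γ) → Deriv3 ((Form.parr A B, i) ::ₘ Γ)
  | fa (Γ : Multiset IForm) (A : Form) (X : ℕ) (i : ℤ) :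
      Deriv3 ((A, i) ::ₘ Γ) → (∀ p ∈ Γ, X ∉ (Prod.fst p).fv) →
      Deriv3 ((Form.fa X A, i) ::ₘ Γ)
  | ex (Γ : Multiset IForm) (A B : Form) (X : ℕ) (i : ℤ) :
      Deriv3 ((Form.subst B X A, i) ::ₘ Γ) → Deriv3 ((Form.ex X A, i) ::ₘ Γ)
  | prom (Γ : Multiset IForm) (A : Form) (i : ℤ) :
      Deriv3 ((A, i + 1) ::ₘ Γ.map (fun p => (Form.wn p.1, p.2))) →
      Deriv3 ((Form.oc A, i) ::ₘ Γ.map (fun p => (Form.wn p.1, p.2)))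
  | der (Γ : Multiset IForm) (A : Form) (i : ℤ) :
      Deriv3 ((A, i + 1) ::ₘ Γ) → Deriv3 ((Form.wn A, i) ::ₘ Γ)
  | weak (Γ : Multiset IForm) (A : Form) (i : ℤ) :
      Deriv3 Γ → Deriv3 ((Form.wn A, i) ::ₘ Γ)
  | contr (Γ : Multiset IForm) (A : Form) (i : ℤ) :
      Deriv3 ((Form.wn A, i) ::ₘ (Form.wn A, i) ::ₘ Γ) →
      Deriv3 ((Form.wn A, i) ::ₘ Γ)
  | parg (Γ : Multiset IForm) (A : Form) (i : ℤ) :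
      Deriv3 ((A, i + 1) ::ₘ Γ) → Deriv3 ((Form.parg A, i) ::ₘ Γ)
  | daimon : Deriv3 0
  | mix (Γ Δ : Multiset IForm) : Deriv3 Γ → Deriv3 Δ → Deriv3 (Γ + Δ)

/-- Linear implication `A ⊸ B = A⊥ ⅋ B`. -/
def limp (A B : Form) : Form := Form.parr A.negF B

/-!
Promotion in mL³ lowers the index of the promoted formula only, leaving the `?`-context
where it is. Promoting the axiom `⊢ (?A⊥)^{i+1}, (!A)^{i+1}` therefore gives
`⊢ (!!A)^i, (?A⊥)^{i+1}`, which mELL's stratification forbids. Tensoring it with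
`⊢ (?B)^i, (B⊥)^{i+1}` and closing `(?A⊥ ⅋ B⊥)^{i+1}` by par and dereliction brings every
formula back to index `i`.
-/

namespace Deriv3

lemma of_eq {Γ Δ : Multiset IForm} (d : Deriv3 Γ) (h : Γ = Δ) : Deriv3 Δ := h ▸ d

lemma ax_comm (A : Form) (i : ℤ) : Deriv3 {(A, i), (A.negF, i)} :=
  (ax A i).of_eq (Multiset.pair_comm _ _)

lemma oc_oc_wn_negF (A : Form) (i : ℤ) :
    Deriv3 {(Form.oc (Form.oc A), i), (Form.wn A.negF, i + 1)} :=
  prom {(A.negF, i + 1)} (Form.oc A) i (ax_comm (Form.oc A) (i + 1))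

lemma wn_negF (B : Form) (i : ℤ) : Deriv3 {(Form.wn B, i), (B.negF, i + 1)} :=
  der _ B i (ax_comm B (i + 1))

lemma tens_oc_oc_wn (A B : Form) (i : ℤ) :
    Deriv3 {(Form.tens (Form.oc (Form.oc A)) (Form.wn B), i),
      (Form.wn A.negF, i + 1), (B.negF, i + 1)} :=
  tens _ _ _ _ i (oc_oc_wn_negF A i) (wn_negF B i)

lemma wn_parr_of {C D E : Form} {i : ℤ} (d : Deriv3 {(E, i), (C, i + 1), (D, i + 1)}) :
    Deriv3 {(Form.wn (Form.parr C D), i), (E, i)} :=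
  der _ _ i <| parr {(E, i)} C D (i + 1) <| d.of_eq <|
    (Multiset.cons_swap _ _ _).trans (congrArg _ (Multiset.pair_comm _ _))

end Deriv3

/-- For all meLL formulas A and B, the sequent ⊢ (!(!A⊗B) ⊸ (!!A ⊗ ?B))^0 is
provable in the mL³ 2-sequent calculus, i.e. the 2-sequent
⊢ (?(?A⊥ ⅋ B⊥))^0, (!!A ⊗ ?B)^0 has a (trivially proper, since all conclusions
carry index 0) derivation. -/
theorem mLLL_extends_mELL_provability (A B : Form) :
    Deriv3 {(Form.wn (Form.parr (Form.wn A.negF) B.negF), 0),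
            (Form.tens (Form.oc (Form.oc A)) (Form.wn B), 0)} ∧
    Deriv3 {(limp (Form.oc (Form.tens (Form.oc A) B))
              (Form.tens (Form.oc (Form.oc A)) (Form.wn B)), 0)} := by
  have core := Deriv3.tens_oc_oc_wn A B 0
  -- `limp (!(!A ⊗ B)) T` unfolds to `?(B⊥ ⅋ ?A⊥) ⅋ T`: the par premises come swapped.
  refine ⟨Deriv3.wn_parr_of core, Deriv3.parr 0 _ _ 0 (Deriv3.wn_parr_of ?_)⟩
  exact core.of_eq (congrArg _ (Multiset.pair_comm _ _))
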